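/- Let A be a positive bounded self-adjoint operator on a nonzero right quaternionic Hilbert space. Then m(A) and M(A) belong to the S-spectrum of A, i.e., (A − m(A)I)² and (A − M(A)I)² are not boundedly invertible. -/

import Mathlib

noncomputable section

open MulOpposite

abbrev Quat := Quaternion ℝ

class RQH (V : Type*) [NormedAddCommGroup V] [Module Quatᵐᵒᵖ V] where
  inn : V → V → Quat
  conj_symm : ∀ φ ψ : V, star (inn φ ψ) = inn ψ φ
  add_right : ∀ φ ψ ω : V, inn φ (ψ + ω) = inn φ ψ + inn φ ω
  smul_right : ∀ (φ ψ : V) (q : Quat), inn φ (op q • ψ) = inn φ ψ * q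
  norm_sq : ∀ φ : V, inn φ φ = ((‖φ‖ ^ 2 : ℝ) : Quat)

open RQH

variable {V : Type*} [NormedAddCommGroup V] [Module Quatᵐᵒᵖ V] [CompleteSpace V] [RQH V]

def IsBddRL (A : V → V) : Prop :=
  (∀ x y : V, A (x + y) = A x + A y) ∧
  (∀ (q : Quatᵐᵒᵖ) (x : V), A (q • x) = q • A x) ∧
  (∃ C : ℝ, ∀ x : V, ‖A x‖ ≤ C * ‖x‖)

def IsSA (A : V → V) : Prop := ∀ φ ψ : V, inn (A φ) ψ = inn φ (A ψ)

def IsPos (A : V → V) : Prop := ∀ φ : V, ∃ r : ℝ, 0 ≤ r ∧ inn (A φ) φ = (r : Quat)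

def opN (A : V → V) : ℝ := sSup { r : ℝ | ∃ φ : V, ‖φ‖ = 1 ∧ r = ‖A φ‖ }

def mA (A : V → V) : ℝ := sInf { r : ℝ | ∃ φ : V, ‖φ‖ = 1 ∧ r = (inn (A φ) φ).re }

def MA (A : V → V) : ℝ := sSup { r : ℝ | ∃ φ : V, ‖φ‖ = 1 ∧ r = (inn (A φ) φ).re }

def Rq (A : V → V) (l : Quat) (ψ : V) : V :=
  A (A ψ) - op ((2 * l.re : ℝ) : Quat) • A ψ + op ((‖l‖ ^ 2 : ℝ) : Quat) • ψ

def SInv (T : V → V) : Prop :=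
  ∃ B : V → V, IsBddRL B ∧ (∀ x, T (B x) = x) ∧ (∀ x, B (T x) = x)

def sspec (A : V → V) : Set Quat := { l | ¬ SInv (Rq A l) }

/-!
For real `λ`, `R_λ(A) = B²` with `B = A - λ`. Take `λ = m(A)` (for `M(A)` use `λ - A` instead):
then `B` is self-adjoint, `re ⟪B φ, φ⟫ ≥ 0` for all `φ`, and this quantity gets arbitrarily small
on unit vectors. Cauchy–Schwarz for the nonnegative real form `(φ, ψ) ↦ re ⟪B φ, ψ⟫`, applied to
`φ` and `B φ`, gives `‖B φ‖² ≤ ‖B‖ re ⟪B φ, φ⟫`; hence `‖B² φ‖ ≤ ‖B‖ ‖B φ‖` gets arbitrarily small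
on unit vectors and `B²` has no bounded inverse. Only real parts of the quaternionic inner product
enter the argument.
-/

section InnerProduct

variable {V : Type*} [NormedAddCommGroup V] [Module Quatᵐᵒᵖ V] [RQH V]

theorem inn_add_left (φ ψ ω : V) : inn (φ + ψ) ω = inn φ ω + inn ψ ω := by
  rw [← conj_symm, add_right, star_add, conj_symm, conj_symm]

theorem inn_smul_left (φ ψ : V) (q : Quat) : inn (op q • φ) ψ = star q * inn φ ψ := by
  rw [← conj_symm, smul_right, star_mul, conj_symm]

def innRight (φ : V) : V →+ Quat := AddMonoidHom.mk' (inn φ) (add_right φ)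

theorem inn_zero_right (φ : V) : inn φ 0 = 0 := (innRight φ).map_zero

theorem inn_sub_right (φ ψ ω : V) : inn φ (ψ - ω) = inn φ ψ - inn φ ω :=
  (innRight φ).map_sub ψ ω

theorem inn_sub_left (φ ψ ω : V) : inn (φ - ψ) ω = inn φ ω - inn ψ ω := by
  rw [← conj_symm, inn_sub_right, star_sub, conj_symm, conj_symm]

theorem re_inn_comm (φ ψ : V) : (inn φ ψ).re = (inn ψ φ).re := by
  rw [← conj_symm, Quaternion.re_star]

theorem re_inn_self (φ : V) : (inn φ φ).re = ‖φ‖ ^ 2 := by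
  rw [norm_sq, Quaternion.re_coe]

theorem re_inn_ofReal_smul_left (r : ℝ) (φ ψ : V) :
    (inn (op (r : Quat) • φ) ψ).re = r * (inn φ ψ).re := by
  rw [inn_smul_left, Quaternion.star_coe, Quaternion.coe_mul_eq_smul, Quaternion.re_smul,
    smul_eq_mul]

theorem re_inn_ofReal_smul_right (r : ℝ) (φ ψ : V) :
    (inn φ (op (r : Quat) • ψ)).re = r * (inn φ ψ).re := by
  rw [re_inn_comm, re_inn_ofReal_smul_left, re_inn_comm]

theorem norm_op_smul (q : Quat) (ψ : V) : ‖op q • ψ‖ = ‖q‖ * ‖ψ‖ := by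
  have h := congrArg norm (norm_sq (op q • ψ))
  rw [smul_right, inn_smul_left, norm_sq] at h
  simp only [norm_mul, Quaternion.norm_coe, norm_star, Real.norm_eq_abs, abs_pow, abs_norm] at h
  rw [← pow_left_inj₀ (norm_nonneg _) (by positivity) two_ne_zero, mul_pow]
  linarith

theorem norm_op_inv_norm_smul {ψ : V} (hψ : ψ ≠ 0) : ‖op ((‖ψ‖⁻¹ : ℝ) : Quat) • ψ‖ = 1 := by
  rw [norm_op_smul, Quaternion.norm_coe, norm_inv, norm_norm,
    inv_mul_cancel₀ (norm_ne_zero_iff.mpr hψ)]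

theorem exists_norm_eq_one [Nontrivial V] : ∃ φ : V, ‖φ‖ = 1 :=
  let ⟨_, hψ⟩ := exists_ne (0 : V)
  ⟨_, norm_op_inv_norm_smul hψ⟩

end InnerProduct

section Operators

variable {V : Type*} [NormedAddCommGroup V] [Module Quatᵐᵒᵖ V]

def IsBddRL.toLinearMap {A : V → V} (hA : IsBddRL A) : Module.End Quatᵐᵒᵖ V :=
  ⟨⟨A, hA.1⟩, hA.2.1⟩

-- Linear over the noncommutative scalars `ℍᵐᵒᵖ` because real quaternions are central.
def realScalar (r : ℝ) : Module.End Quatᵐᵒᵖ V where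
  toFun ψ := op (r : Quat) • ψ
  map_add' := smul_add _
  map_smul' q ψ := by
    rw [RingHom.id_apply, smul_smul, smul_smul, ← op_unop q, ← op_mul, ← op_mul,
      Quaternion.coe_commutes]

theorem realScalar_apply (r : ℝ) (ψ : V) : realScalar r ψ = op (r : Quat) • ψ := rfl

theorem norm_sub_apply_le {f g : Module.End Quatᵐᵒᵖ V} {a b : ℝ} (hf : ∀ x, ‖f x‖ ≤ a * ‖x‖)
    (hg : ∀ x, ‖g x‖ ≤ b * ‖x‖) (x : V) : ‖(f - g) x‖ ≤ (a + b) * ‖x‖ := by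
  rw [LinearMap.sub_apply, add_mul]
  exact (norm_sub_le _ _).trans (add_le_add (hf x) (hg x))

theorem rq_ofReal_eq_mul_self (L : Module.End Quatᵐᵒᵖ V) (μ : ℝ) :
    Rq (⇑L) (μ : Quat) = ⇑((L - realScalar μ) * (L - realScalar μ) : Module.End Quatᵐᵒᵖ V) := by
  funext ψ
  have htwo : op ((2 * (μ : Quat).re : ℝ) : Quat) = op (μ : Quat) + op (μ : Quat) := by
    rw [Quaternion.re_coe, two_mul, Quaternion.coe_add, op_add]
  have hsq : op ((‖(μ : Quat)‖ ^ 2 : ℝ) : Quat) = op (μ : Quat) * op (μ : Quat) := by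
    rw [Quaternion.norm_coe, Real.norm_eq_abs, sq_abs, sq, Quaternion.coe_mul, op_mul]
  rw [Rq, htwo, hsq, Module.End.mul_apply, LinearMap.sub_apply, LinearMap.sub_apply, map_sub,
    map_sub, realScalar_apply, realScalar_apply, L.map_smul, realScalar_apply, add_smul,
    mul_smul]
  abel

variable [RQH V]

theorem norm_realScalar_apply (r : ℝ) (ψ : V) : ‖realScalar r ψ‖ = |r| * ‖ψ‖ := by
  rw [realScalar_apply, norm_op_smul, Quaternion.norm_coe, Real.norm_eq_abs]

theorem IsSA.sub {f g : Module.End Quatᵐᵒᵖ V} (hf : IsSA f) (hg : IsSA g) : IsSA ⇑(f - g) := by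
  intro φ ψ
  rw [LinearMap.sub_apply, LinearMap.sub_apply, inn_sub_left, inn_sub_right, hf, hg]

theorem isSA_realScalar (r : ℝ) : IsSA ⇑(realScalar r : Module.End Quatᵐᵒᵖ V) := by
  intro φ ψ
  rw [realScalar_apply, realScalar_apply, inn_smul_left, smul_right, Quaternion.star_coe,
    Quaternion.coe_commutes]

theorem re_inn_realScalar_apply (r : ℝ) (ψ : V) : (inn (realScalar r ψ) ψ).re = r * ‖ψ‖ ^ 2 := by
  rw [realScalar_apply, re_inn_ofReal_smul_left, re_inn_self]

theorem re_inn_sub_realScalar_apply (L : Module.End Quatᵐᵒᵖ V) (μ : ℝ) (ψ : V) :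
    (inn ((L - realScalar μ : Module.End Quatᵐᵒᵖ V) ψ) ψ).re
      = (inn (L ψ) ψ).re - μ * ‖ψ‖ ^ 2 := by
  rw [LinearMap.sub_apply, inn_sub_left, Quaternion.re_sub, re_inn_realScalar_apply]

theorem re_inn_realScalar_sub_apply (L : Module.End Quatᵐᵒᵖ V) (μ : ℝ) (ψ : V) :
    (inn ((realScalar μ - L : Module.End Quatᵐᵒᵖ V) ψ) ψ).re
      = μ * ‖ψ‖ ^ 2 - (inn (L ψ) ψ).re := by
  rw [LinearMap.sub_apply, inn_sub_left, Quaternion.re_sub, re_inn_realScalar_apply]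

variable {B : Module.End Quatᵐᵒᵖ V}

theorem re_inn_apply_sq_le (hsa : IsSA B) (hpos : ∀ φ, 0 ≤ (inn (B φ) φ).re) (φ ψ : V) :
    (inn (B φ) ψ).re ^ 2 ≤ (inn (B φ) φ).re * (inn (B ψ) ψ).re := by
  have hsymm : (inn (B ψ) φ).re = (inn (B φ) ψ).re := by rw [hsa, re_inn_comm]
  have hquad : ∀ t : ℝ, 0 ≤ (inn (B ψ) ψ).re * (t * t) + 2 * (inn (B φ) ψ).re * t
      + (inn (B φ) φ).re := by
    intro t
    have h := hpos (φ + op (t : Quat) • ψ)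
    rw [map_add, map_smul, inn_add_left, add_right, add_right, Quaternion.re_add,
      Quaternion.re_add, Quaternion.re_add, re_inn_ofReal_smul_left, re_inn_ofReal_smul_right,
      re_inn_ofReal_smul_left, re_inn_ofReal_smul_right, hsymm] at h
    linarith
  have h := discrim_le_zero hquad
  rw [discrim] at h
  linarith

theorem abs_re_inn_le (φ ψ : V) : |(inn φ ψ).re| ≤ ‖φ‖ * ‖ψ‖ := by
  have h := re_inn_apply_sq_le (B := LinearMap.id) (fun _ _ => rfl)
    (fun φ => (re_inn_self φ).symm ▸ sq_nonneg _) φ ψ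
  simp only [LinearMap.id_apply, re_inn_self] at h
  exact abs_le_of_sq_le_sq (by rw [mul_pow]; exact h) (by positivity)

theorem norm_apply_sq_le_mul_re_inn {C : ℝ} (hC0 : 0 ≤ C) (hC : ∀ x, ‖B x‖ ≤ C * ‖x‖) (hsa : IsSA B)
    (hpos : ∀ φ, 0 ≤ (inn (B φ) φ).re) (φ : V) : ‖B φ‖ ^ 2 ≤ C * (inn (B φ) φ).re := by
  have hcs := re_inn_apply_sq_le hsa hpos φ (B φ)
  have hBB : (inn (B (B φ)) (B φ)).re ≤ C * ‖B φ‖ ^ 2 := calc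
    _ ≤ ‖B (B φ)‖ * ‖B φ‖ := (le_abs_self _).trans (abs_re_inn_le _ _)
    _ ≤ C * ‖B φ‖ * ‖B φ‖ := by gcongr; exact hC _
    _ = C * ‖B φ‖ ^ 2 := by ring
  rw [re_inn_self] at hcs
  rcases (sq_nonneg ‖B φ‖).eq_or_lt with h0 | h0
  · rw [← h0]
    exact mul_nonneg hC0 (hpos φ)
  · nlinarith [mul_le_mul_of_nonneg_left hBB (hpos φ)]

theorem not_SInv_mul_self {C : ℝ} (hC : ∀ x, ‖B x‖ ≤ C * ‖x‖) (hsa : IsSA B)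
    (hpos : ∀ φ, 0 ≤ (inn (B φ) φ).re)
    (happrox : ∀ ε > 0, ∃ φ : V, ‖φ‖ = 1 ∧ (inn (B φ) φ).re < ε) : ¬ SInv ⇑(B * B) := by
  rintro ⟨G, ⟨-, -, K, hK⟩, -, hGB⟩
  set K' := max K 0
  have hK' : ∀ x, ‖G x‖ ≤ K' * ‖x‖ := fun x => (hK x).trans (by gcongr; exact le_max_left _ _)
  have hC0 : 0 ≤ C := by
    obtain ⟨φ, hφ, -⟩ := happrox 1 one_pos
    simpa only [hφ, mul_one] using (norm_nonneg _).trans (hC φ)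
  set E := (K' * C) ^ 2 * C
  obtain ⟨φ, hφ, hsmall⟩ := happrox (1 / (E + 1)) (by positivity)
  have hlower : 1 ≤ K' * C * ‖B φ‖ := calc
    (1 : ℝ) = ‖G ((B * B) φ)‖ := by rw [hGB, hφ]
    _ ≤ K' * ‖B (B φ)‖ := hK' _
    _ ≤ K' * (C * ‖B φ‖) := by gcongr; exact hC _
    _ = K' * C * ‖B φ‖ := by ring
  have hupper : (K' * C * ‖B φ‖) ^ 2 ≤ E * (inn (B φ) φ).re := calc
    _ = (K' * C) ^ 2 * ‖B φ‖ ^ 2 := by ring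
    _ ≤ (K' * C) ^ 2 * (C * (inn (B φ) φ).re) := by
      gcongr; exact norm_apply_sq_le_mul_re_inn hC0 hC hsa hpos φ
    _ = E * (inn (B φ) φ).re := by ring
  have hE : E * (inn (B φ) φ).re < 1 := calc
    _ ≤ E * (1 / (E + 1)) := by gcongr
    _ < 1 := by rw [mul_one_div, div_lt_one (by positivity)]; linarith
  nlinarith [hlower, hupper, hE]

end Operators

section NumericalRange

variable {V : Type*} [NormedAddCommGroup V] [Module Quatᵐᵒᵖ V] [RQH V]

def realNumericalRange (A : V → V) : Set ℝ := {r | ∃ φ : V, ‖φ‖ = 1 ∧ r = (inn (A φ) φ).re}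

theorem realNumericalRange_nonempty [Nontrivial V] (A : V → V) :
    (realNumericalRange A).Nonempty :=
  let ⟨φ, hφ⟩ := exists_norm_eq_one (V := V)
  ⟨_, φ, hφ, rfl⟩

theorem realNumericalRange_subset_Icc {A : V → V} {C : ℝ} (hC : ∀ x, ‖A x‖ ≤ C * ‖x‖) :
    realNumericalRange A ⊆ Set.Icc (-C) C := by
  rintro _ ⟨φ, hφ, rfl⟩
  refine abs_le.mp ((abs_re_inn_le (A φ) φ).trans ?_)
  simpa only [hφ, mul_one] using hC φ

theorem exists_mem_realNumericalRange_mul_norm_sq [Nontrivial V] (L : Module.End Quatᵐᵒᵖ V)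
    (ψ : V) : ∃ r ∈ realNumericalRange L, (inn (L ψ) ψ).re = r * ‖ψ‖ ^ 2 := by
  rcases eq_or_ne ψ 0 with rfl | hψ
  · obtain ⟨r, hr⟩ := realNumericalRange_nonempty L
    exact ⟨r, hr, by rw [inn_zero_right, Quaternion.re_zero, norm_zero]; ring⟩
  · refine ⟨_, ⟨_, norm_op_inv_norm_smul hψ, rfl⟩, ?_⟩
    have hψ' : ‖ψ‖ ≠ 0 := norm_ne_zero_iff.mpr hψ
    rw [map_smul, re_inn_ofReal_smul_left, re_inn_ofReal_smul_right]
    field_simp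

variable [Nontrivial V] {L : Module.End Quatᵐᵒᵖ V} {C : ℝ}

theorem mA_mul_norm_sq_le (hC : ∀ x, ‖L x‖ ≤ C * ‖x‖) (ψ : V) :
    mA L * ‖ψ‖ ^ 2 ≤ (inn (L ψ) ψ).re := by
  obtain ⟨r, hr, hψ⟩ := exists_mem_realNumericalRange_mul_norm_sq L ψ
  rw [hψ]
  gcongr
  exact csInf_le (bddBelow_Icc.mono (realNumericalRange_subset_Icc hC)) hr

theorem re_inn_le_MA_mul_norm_sq (hC : ∀ x, ‖L x‖ ≤ C * ‖x‖) (ψ : V) :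
    (inn (L ψ) ψ).re ≤ MA L * ‖ψ‖ ^ 2 := by
  obtain ⟨r, hr, hψ⟩ := exists_mem_realNumericalRange_mul_norm_sq L ψ
  rw [hψ]
  gcongr
  exact le_csSup (bddAbove_Icc.mono (realNumericalRange_subset_Icc hC)) hr

theorem exists_re_inn_lt_mA_add (A : V → V) {ε : ℝ} (hε : 0 < ε) :
    ∃ φ : V, ‖φ‖ = 1 ∧ (inn (A φ) φ).re < mA A + ε := by
  obtain ⟨_, ⟨φ, hφ, rfl⟩, hlt⟩ :=
    exists_lt_of_csInf_lt (realNumericalRange_nonempty A) (lt_add_of_pos_right (mA A) hε)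
  exact ⟨φ, hφ, hlt⟩

theorem exists_MA_sub_lt_re_inn (A : V → V) {ε : ℝ} (hε : 0 < ε) :
    ∃ φ : V, ‖φ‖ = 1 ∧ MA A - ε < (inn (A φ) φ).re := by
  obtain ⟨_, ⟨φ, hφ, rfl⟩, hlt⟩ :=
    exists_lt_of_lt_csSup (realNumericalRange_nonempty A) (sub_lt_self (MA A) hε)
  exact ⟨φ, hφ, hlt⟩

theorem mA_mem_sspec (hC : ∀ x, ‖L x‖ ≤ C * ‖x‖) (hsa : IsSA L) :
    ((mA L : ℝ) : Quat) ∈ sspec L := by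
  change ¬ SInv (Rq L _)
  rw [rq_ofReal_eq_mul_self]
  refine not_SInv_mul_self (norm_sub_apply_le hC fun x => (norm_realScalar_apply _ x).le)
    (hsa.sub (isSA_realScalar _)) (fun ψ => ?_) (fun ε hε => ?_)
  · rw [re_inn_sub_realScalar_apply]
    linarith [mA_mul_norm_sq_le hC ψ]
  · obtain ⟨φ, hφ, hlt⟩ := exists_re_inn_lt_mA_add (⇑L) hε
    exact ⟨φ, hφ, by rw [re_inn_sub_realScalar_apply, hφ]; linarith⟩

theorem MA_mem_sspec (hC : ∀ x, ‖L x‖ ≤ C * ‖x‖) (hsa : IsSA L) :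
    ((MA L : ℝ) : Quat) ∈ sspec L := by
  change ¬ SInv (Rq L _)
  rw [rq_ofReal_eq_mul_self, ← neg_mul_neg, neg_sub]
  refine not_SInv_mul_self (norm_sub_apply_le (fun x => (norm_realScalar_apply _ x).le) hC)
    ((isSA_realScalar _).sub hsa) (fun ψ => ?_) (fun ε hε => ?_)
  · rw [re_inn_realScalar_sub_apply]
    linarith [re_inn_le_MA_mul_norm_sq hC ψ]
  · obtain ⟨φ, hφ, hlt⟩ := exists_MA_sub_lt_re_inn (⇑L) hε
    exact ⟨φ, hφ, by rw [re_inn_realScalar_sub_apply, hφ]; linarith⟩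

end NumericalRange

theorem stmt11_general [Nontrivial V] (A : V → V) (hA : IsBddRL A) (hsa : IsSA A) :
    ((mA A : ℝ) : Quat) ∈ sspec A ∧ ((MA A : ℝ) : Quat) ∈ sspec A :=
  let ⟨_, hC⟩ := hA.2.2
  ⟨mA_mem_sspec (L := hA.toLinearMap) hC hsa, MA_mem_sspec (L := hA.toLinearMap) hC hsa⟩

/-- m(A) and M(A) belong to the S-spectrum of a positive bounded self-adjoint operator. -/
theorem stmt11 [Nontrivial V] (A : V → V) (hA : IsBddRL A) (hsa : IsSA A) (hpos : IsPos A) :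
    ((mA A : ℝ) : Quat) ∈ sspec A ∧ ((MA A : ℝ) : Quat) ∈ sspec A :=
  stmt11_general A hA hsa
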